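/- arXiv:0908.0423 — 2 statements merged into one kernel-verified Lean document; each statement's English description precedes it below -/
import Mathlib

section
/- In the setting of a Riemannian submersion φ : M → N with Φ = φ_* : TM → TN and Cheeger–Gromoll type metrics on TM and TN: for η ∈ V^φ_x (vertical for φ) and ξ ∈ T_xM, the vertical lift η^v_ξ lies in V^Φ_ξ = ker Φ_*; and for X ∈ H^φ_x (horizontal for φ), the horizontal lift X^h_ξ lies in H^Φ_ξ, the h_{p,q,α}-orthogonal complement of ker Φ_*. -/
open Function
open scoped BigOperators

noncomputable section

/-- A Riemannian metric on a vector space regarded as a global chart of a manifold: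
a symmetric, positive definite, smoothly point-dependent bilinear form. -/
def IsMetric {P : Type*} [NormedAddCommGroup P] [NormedSpace ℝ P]
    (g : P → P → P → ℝ) : Prop :=
  (∀ x u v, g x u v = g x v u) ∧
  (∀ x u, u ≠ 0 → 0 < g x u u) ∧
  (∀ x v, IsLinearMap ℝ (fun u => g x u v)) ∧
  (∀ u v, ContDiff ℝ (⊤ : ℕ∞) fun x => g x u v)

/-- Christoffel symbols: a smoothly point-dependent bilinear map. -/
def IsChristoffel {P : Type*} [NormedAddCommGroup P] [NormedSpace ℝ P]
    (Γ : P → P → P → P) : Prop :=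
  (∀ x v, IsLinearMap ℝ (fun u => Γ x u v)) ∧
  (∀ x u, IsLinearMap ℝ (fun v => Γ x u v)) ∧
  (∀ u v, ContDiff ℝ (⊤ : ℕ∞) fun x => Γ x u v)

/-- `Γ` are the Christoffel symbols of the Levi-Civita connection of the metric `g`:
they are symmetric (torsion-free) and the metric is covariantly constant. -/
def IsLeviCivita {P : Type*} [NormedAddCommGroup P] [NormedSpace ℝ P]
    (g : P → P → P → ℝ) (Γ : P → P → P → P) : Prop :=
  IsChristoffel Γ ∧
  (∀ x u v, Γ x u v = Γ x v u) ∧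
  (∀ x u v w, fderiv ℝ (fun y => g y u v) x w = g x (Γ x w u) v + g x u (Γ x w v))

variable {E : Type*} [NormedAddCommGroup E] [NormedSpace ℝ E]
variable {F : Type*} [NormedAddCommGroup F] [NormedSpace ℝ F]

/-- The second fundamental form `B = ∇ φ_*` of a map `φ`, in global charts:
`B(X,Y) = ∇^φ_X φ_* Y - φ_*(∇^M_X Y)`. -/
def sff (ΓM : E → E → E → E) (ΓN : F → F → F → F) (φ : E → F) (x X Y : E) : F :=
  fderiv ℝ (fun y => fderiv ℝ φ y Y) x X
    + ΓN (φ x) (fderiv ℝ φ x X) (fderiv ℝ φ x Y)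
    - fderiv ℝ φ x (ΓM x X Y)

/-- The differential `Φ = φ_* : TM → TN` in global charts (`TM = E × E`, `TN = F × F`). -/
def tmap (φ : E → F) : E × E → F × F := fun z => (φ z.1, fderiv ℝ φ z.1 z.2)

/-- The horizontal lift `u^h_ξ ∈ T_ξ TM` (at base point `x`), in global charts:
the kernel of the connection map `K(a,b) = b + Γ_x(a, ξ)`. -/
def hlift {P : Type*} [NormedAddCommGroup P] [NormedSpace ℝ P]
    (Γ : P → P → P → P) (x ξ u : P) : P × P := (u, -Γ x u ξ)

/-- The vertical lift `w^v_ξ ∈ T_ξ TM` in global charts. -/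
def vlift {P : Type*} [NormedAddCommGroup P] [NormedSpace ℝ P] (w : P) : P × P := (0, w)

/-- The Cheeger–Gromoll type metric `h_{p,q,α}` at the point `ξ ∈ T_x M`, evaluated on
`A, B ∈ T_ξ TM`, in global charts:  `h(A,B) = g(π_* A, π_* B) + ω_α(ξ)^p (g(KA,KB) + q g(KA,ξ) g(KB,ξ))`
where `ω_α(ξ) = (1 + α g(ξ,ξ))⁻¹` and `K(a,b) = b + Γ_x(a,ξ)` is the connection map. -/
def cg {P : Type*} [NormedAddCommGroup P] [NormedSpace ℝ P]
    (g : P → P → P → ℝ) (Γ : P → P → P → P) (p q α : ℝ) (x ξ : P) (A B : P × P) : ℝ :=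
  g x A.1 B.1 + ((1 + α * g x ξ ξ)⁻¹) ^ p *
    (g x (A.2 + Γ x A.1 ξ) (B.2 + Γ x B.1 ξ)
      + q * g x (A.2 + Γ x A.1 ξ) ξ * g x (B.2 + Γ x B.1 ξ) ξ)

/-- The horizontal space `H^φ_x = (ker φ_{*x})^⊥` of a map `φ` at `x`, w.r.t. the metric `g`. -/
def Hor (g : E → E → E → ℝ) (φ : E → F) (x : E) : Set E :=
  {X | ∀ Z, fderiv ℝ φ x Z = 0 → g x X Z = 0}

/-- `φ` is a horizontally conformal submersion with dilatation `lam`. -/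
def HCSub (g : E → E → E → ℝ) (gN : F → F → F → ℝ) (φ : E → F) (lam : E → ℝ) : Prop :=
  (∀ x, Surjective (fderiv ℝ φ x)) ∧ (∀ x, 0 < lam x) ∧
  ∀ x, ∀ X ∈ Hor g φ x, ∀ Y ∈ Hor g φ x,
    gN (φ x) (fderiv ℝ φ x X) (fderiv ℝ φ x Y) = lam x * g x X Y

/-- The horizontal space of `Φ = φ_* : TM → TN` at `z = (x,ξ)`, i.e. the orthogonal
complement of `ker Φ_*` with respect to the Cheeger–Gromoll type metric `h_{p,q,α}`. -/
def HorT (g : E → E → E → ℝ) (Γ : E → E → E → E) (p q α : ℝ) (φ : E → F) (z : E × E) :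
    Set (E × E) :=
  {A | ∀ A', fderiv ℝ (tmap φ) z A' = 0 → cg g Γ p q α z.1 z.2 A A' = 0}

/-- `Φ = φ_* : (TM, h_{p,q,α}) → (TN, h_{r,s,β})` is a horizontally conformal submersion
with dilatation `Lam`. -/
def HCSubT (g : E → E → E → ℝ) (Γ : E → E → E → E) (p q α : ℝ)
    (gN : F → F → F → ℝ) (ΓN : F → F → F → F) (r s β : ℝ)
    (φ : E → F) (Lam : E × E → ℝ) : Prop :=
  (∀ z, Surjective (fderiv ℝ (tmap φ) z)) ∧ (∀ z, 0 < Lam z) ∧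
  ∀ z : E × E, ∀ A ∈ HorT g Γ p q α φ z, ∀ A' ∈ HorT g Γ p q α φ z,
    cg gN ΓN r s β (φ z.1) (fderiv ℝ φ z.1 z.2)
        (fderiv ℝ (tmap φ) z A) (fderiv ℝ (tmap φ) z A')
      = Lam z * cg g Γ p q α z.1 z.2 A A'

/-- `φ` is horizontally conformal with dilatation `lam` (general form, allowing critical
points: at each point either `φ_{*x} = 0`, or `φ_{*x}` is a surjective conformal map on
the horizontal space with positive factor `lam x`). -/
def HorizConf (g : E → E → E → ℝ) (gN : F → F → F → ℝ) (φ : E → F) (lam : E → ℝ) : Prop :=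
  ∀ x, fderiv ℝ φ x = 0 ∨
    (0 < lam x ∧ Surjective (fderiv ℝ φ x) ∧
      ∀ X ∈ Hor g φ x, ∀ Y ∈ Hor g φ x,
        gN (φ x) (fderiv ℝ φ x X) (fderiv ℝ φ x Y) = lam x * g x X Y)

/-- `Φ = φ_* : (TM, h_{p,q,α}) → (TN, h_{r,s,β})` is horizontally conformal with
dilatation `Lam` (general form, allowing critical points). -/
def HorizConfT (g : E → E → E → ℝ) (Γ : E → E → E → E) (p q α : ℝ)
    (gN : F → F → F → ℝ) (ΓN : F → F → F → F) (r s β : ℝ)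
    (φ : E → F) (Lam : E × E → ℝ) : Prop :=
  ∀ z : E × E, fderiv ℝ (tmap φ) z = 0 ∨
    (0 < Lam z ∧ Surjective (fderiv ℝ (tmap φ) z) ∧
      ∀ A ∈ HorT g Γ p q α φ z, ∀ A' ∈ HorT g Γ p q α φ z,
        cg gN ΓN r s β (φ z.1) (fderiv ℝ φ z.1 z.2)
            (fderiv ℝ (tmap φ) z A) (fderiv ℝ (tmap φ) z A')
          = Lam z * cg g Γ p q α z.1 z.2 A A')

/-- `φ` is a harmonic map: its tension field, the `g`-trace of the second fundamental
form, vanishes (computed in any `g`-orthonormal basis). -/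
def Harmonic (g : E → E → E → ℝ) (ΓM : E → E → E → E) (ΓN : F → F → F → F)
    (φ : E → F) : Prop :=
  ∀ (x : E) (n : ℕ) (e : Fin n → E),
    (∀ i j, g x (e i) (e j) = if i = j then 1 else 0) →
    Submodule.span ℝ (Set.range e) = ⊤ →
    ∑ i, sff ΓM ΓN φ x (e i) (e i) = 0

/-- The tensor `S` measuring the change of the Levi-Civita connection under the conformal
change `g ↦ λ g`:  `S(X,Y) = (1/(2λ))((Xλ)Y + (Yλ)X − g(X,Y) grad λ)`. -/
def Sconf (g : E → E → E → ℝ) (lam : E → ℝ) (gradlam : E → E) (x X Y : E) : E :=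
  (2 * lam x)⁻¹ • ((fderiv ℝ lam x X) • Y + (fderiv ℝ lam x Y) • X - (g x X Y) • gradlam x)

/- In charts Φ_*(a, b) = (φ_* a, φ_* b + D²φ(a, ξ)), so a vertical lift (0, η) goes to the
vertical lift of φ_* η, and the kernel of Φ_* lies over the kernel of φ_*. A horizontal lift is
killed by the connection map, so h_{p,q,α}(X^h_ξ, A) = g(X, π_* A), which vanishes when X is
horizontal and π_* A is vertical. -/

theorem hasFDerivAt_tmap {φ : E → F} {x : E} (ξ : E) (hφ : DifferentiableAt ℝ φ x)
    (hdφ : DifferentiableAt ℝ (fderiv ℝ φ) x) :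
    HasFDerivAt (tmap φ)
      (((fderiv ℝ φ x).comp (ContinuousLinearMap.fst ℝ E E)).prod
        ((fderiv ℝ φ x).comp (ContinuousLinearMap.snd ℝ E E)
          + ((fderiv ℝ (fderiv ℝ φ) x).comp (ContinuousLinearMap.fst ℝ E E)).flip ξ))
      (x, ξ) := by
  have hbase : HasFDerivAt (fun z : E × E => φ z.1)
      ((fderiv ℝ φ x).comp (ContinuousLinearMap.fst ℝ E E)) (x, ξ) :=
    hφ.hasFDerivAt.comp (x, ξ) hasFDerivAt_fst
  have hfiber : HasFDerivAt (fun z : E × E => fderiv ℝ φ z.1 z.2)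
      ((fderiv ℝ φ x).comp (ContinuousLinearMap.snd ℝ E E)
        + ((fderiv ℝ (fderiv ℝ φ) x).comp (ContinuousLinearMap.fst ℝ E E)).flip ξ) (x, ξ) :=
    HasFDerivAt.clm_apply (c := fun z : E × E => fderiv ℝ φ z.1) (u := Prod.snd)
      (hdφ.hasFDerivAt.comp (x, ξ) hasFDerivAt_fst) hasFDerivAt_snd
  exact hbase.prodMk hfiber

theorem fderiv_tmap_apply {φ : E → F} {x : E} (ξ : E) (hφ : DifferentiableAt ℝ φ x)
    (hdφ : DifferentiableAt ℝ (fderiv ℝ φ) x) (A : E × E) :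
    fderiv ℝ (tmap φ) (x, ξ) A =
      (fderiv ℝ φ x A.1, fderiv ℝ φ x A.2 + fderiv ℝ (fderiv ℝ φ) x A.1 ξ) := by
  rw [(hasFDerivAt_tmap ξ hφ hdφ).fderiv]
  rfl

theorem fderiv_tmap_vlift {φ : E → F} {x : E} (ξ : E) (hφ : DifferentiableAt ℝ φ x)
    (hdφ : DifferentiableAt ℝ (fderiv ℝ φ) x) (η : E) :
    fderiv ℝ (tmap φ) (x, ξ) (vlift η) = vlift (fderiv ℝ φ x η) := by
  simp [fderiv_tmap_apply ξ hφ hdφ, vlift]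

theorem fderiv_fst_eq_zero_of_fderiv_tmap_eq_zero {φ : E → F} {x : E} (ξ : E)
    (hφ : DifferentiableAt ℝ φ x) (hdφ : DifferentiableAt ℝ (fderiv ℝ φ) x) {A : E × E}
    (hA : fderiv ℝ (tmap φ) (x, ξ) A = 0) : fderiv ℝ φ x A.1 = 0 := by
  simpa [fderiv_tmap_apply ξ hφ hdφ] using congrArg Prod.fst hA

theorem hlift_connection {P : Type*} [NormedAddCommGroup P] [NormedSpace ℝ P]
    (Γ : P → P → P → P) (x ξ u : P) :
    (hlift Γ x ξ u).2 + Γ x (hlift Γ x ξ u).1 ξ = 0 :=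
  neg_add_cancel _

theorem cg_hlift_left {P : Type*} [NormedAddCommGroup P] [NormedSpace ℝ P]
    {g : P → P → P → ℝ} {x : P} (hg : ∀ v, IsLinearMap ℝ fun u => g x u v)
    (Γ : P → P → P → P) (p q α : ℝ) (ξ u : P) (A : P × P) :
    cg g Γ p q α x ξ (hlift Γ x ξ u) A = g x u A.1 := by
  have hzero : ∀ v, g x 0 v = 0 := fun v => (hg v).map_zero
  rw [cg, hlift_connection, hzero, hzero]
  simp [hlift]

theorem stmt6_general
    (gM : E → E → E → ℝ)
    (ΓM : E → E → E → E)
    (hgM : IsMetric gM)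
    (φ : E → F) (hφ : ContDiff ℝ (⊤ : ℕ∞) φ)
    (p q α : ℝ)
    (x ξ : E) :
    (∀ η : E, fderiv ℝ φ x η = 0 →
      fderiv ℝ (tmap φ) (x, ξ) (vlift η) = 0) ∧
    (∀ X ∈ Hor gM φ x, ∀ A ∈ LinearMap.ker (fderiv ℝ (tmap φ) (x, ξ) : E × E →ₗ[ℝ] F × F),
      cg gM ΓM p q α x ξ (hlift ΓM x ξ X) A = 0) := by
  have hdiff : DifferentiableAt ℝ φ x := hφ.differentiable (by simp) x
  have hdiff' : DifferentiableAt ℝ (fderiv ℝ φ) x :=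
    (hφ.fderiv_right (m := 1) (WithTop.coe_le_coe.mpr le_top)).differentiable one_ne_zero x
  refine ⟨fun η hη => ?_, fun X hX A hA => ?_⟩
  · rw [fderiv_tmap_vlift ξ hdiff hdiff', hη]
    rfl
  · rw [cg_hlift_left (hgM.2.2.1 x)]
    exact hX A.1 (fderiv_fst_eq_zero_of_fderiv_tmap_eq_zero ξ hdiff hdiff' hA)

/-- Corollary 1. For a submersion `φ : M → N` with `Φ = φ_* : TM → TN`
and Cheeger–Gromoll type metrics on the tangent bundles: for `η` vertical for `φ`, the
vertical lift `η^v_ξ` lies in `V^Φ_ξ = ker Φ_*`; and for `X` horizontal for `φ`, the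
horizontal lift `X^h_ξ` lies in `H^Φ_ξ`, the `h_{p,q,α}`-orthogonal complement of `ker Φ_*`. -/
theorem stmt6
    (gM : E → E → E → ℝ) (gN : F → F → F → ℝ)
    (ΓM : E → E → E → E) (ΓN : F → F → F → F)
    (hgM : IsMetric gM) (hgN : IsMetric gN)
    (hΓM : IsLeviCivita gM ΓM) (hΓN : IsLeviCivita gN ΓN)
    (φ : E → F) (hφ : ContDiff ℝ (⊤ : ℕ∞) φ)
    (hsub : ∀ y, Surjective (fderiv ℝ φ y))
    (p q α : ℝ) (hq : 0 ≤ q) (hα : 0 < α)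
    (x ξ : E) :
    (∀ η : E, fderiv ℝ φ x η = 0 →
      fderiv ℝ (tmap φ) (x, ξ) (vlift η) = 0) ∧
    (∀ X ∈ Hor gM φ x, ∀ A ∈ LinearMap.ker (fderiv ℝ (tmap φ) (x, ξ) : E × E →ₗ[ℝ] F × F),
      cg gM ΓM p q α x ξ (hlift ΓM x ξ X) A = 0) :=
  stmt6_general gM ΓM hgM φ hφ p q α x ξ
end
end

section
/- Let φ : M → N be a horizontally conformal submersion between Riemannian manifolds with dilatation λ, dim M = m, dim N = n. Then the tension field of φ satisfies τ(φ) = −((n−2)/2) φ_*(grad(ln λ)) − (m−n) φ_*(κ_φ), where κ_φ = (1/(m−n)) Σᵢ (∇^M_{eᵢ}eᵢ)^⊥ is the mean curvature vector field of the fibres, (eᵢ) an orthonormal frame of V^φ = ker φ_* and ⊥ the projection onto H^φ. -/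
/-!
For `a`, `b` horizontal at `x`, let `ρ(y) = gN(φ_* a, φ_* b) - λ gM(a, b)`, with `a`, `b` fixed
while the base point `y` moves. For `a = b` it is `≤ 0` everywhere, since `φ_*` only sees the
horizontal part of `a` at `y`, and it vanishes at `x`; so `x` is a maximum, `dρ_x = 0`, and
polarization gives the same for `a ≠ b`. Expanding `dρ_x(u) = 0` with the Levi-Civita connections
gives `gN(B(u,a), φ_* b) + gN(φ_* a, B(u,b)) = (uλ) gM(a,b)`.

Compute the tension field in an orthonormal frame of `T_x M` made of the vertical fields `v_j`
and horizontal vectors `w_i`. Since `φ_* v_j ≡ 0`, `B(v_j, v_j) = -φ_*(∇_{v_j} v_j)`. Pairing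
`Σ B(w_i, w_i)` against `φ_* z` for horizontal `z`, the identity above gives
`-((n-2)/2) (zλ)`, hence `Σ B(w_i, w_i) = -((n-2)/2) φ_*(grad ln λ)` as `gN` is nondegenerate.
-/

open Function
open scoped BigOperators

noncomputable section

variable {E : Type*} [NormedAddCommGroup E] [NormedSpace ℝ E]
variable {F : Type*} [NormedAddCommGroup F] [NormedSpace ℝ F]

section InnerForm

variable {V : Type*} [AddCommGroup V] [Module ℝ V]

structure IsInnerForm (g : V → V → ℝ) : Prop where
  symm : ∀ u w, g u w = g w u
  pos : ∀ u, u ≠ 0 → 0 < g u u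
  isLinearMap_left : ∀ w, IsLinearMap ℝ (g · w)

/-- A copy of `V`, on which the inner product given by an inner form is installed locally. -/
def FormSpace (V : Type*) : Type _ := V

instance : AddCommGroup (FormSpace V) := ‹AddCommGroup V›
instance : Module ℝ (FormSpace V) := ‹Module ℝ V›
instance [FiniteDimensional ℝ V] : FiniteDimensional ℝ (FormSpace V) := ‹FiniteDimensional ℝ V›

namespace IsInnerForm

variable {g : V → V → ℝ}

theorem isLinearMap_right (hg : IsInnerForm g) (u : V) : IsLinearMap ℝ (g u ·) where
  map_add v w := by simp only [hg.symm u, (hg.isLinearMap_left u).map_add]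
  map_smul c v := by simp only [hg.symm u, (hg.isLinearMap_left u).map_smul]

theorem apply_eq_zero_of_mem_span (hg : IsInnerForm g) {ι : Type*} {v : ι → V} {u z : V}
    (hu : ∀ i, g u (v i) = 0) (hz : z ∈ Submodule.span ℝ (Set.range v)) : g u z = 0 := by
  have hle : Submodule.span ℝ (Set.range v) ≤
      LinearMap.ker (IsLinearMap.mk' _ (hg.isLinearMap_right u)) :=
    Submodule.span_le.mpr (by rintro _ ⟨i, rfl⟩; exact hu i)
  exact hle hz

theorem nonneg (hg : IsInnerForm g) (u : V) : 0 ≤ g u u := by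
  rcases eq_or_ne u 0 with rfl | hu
  · exact ((hg.isLinearMap_left 0).map_zero).ge
  · exact (hg.pos u hu).le

theorem apply_add_add (hg : IsInnerForm g) (u v : V) :
    g (u + v) (u + v) = g u u + 2 * g u v + g v v := by
  rw [(hg.isLinearMap_left _).map_add, (hg.isLinearMap_right _).map_add,
    (hg.isLinearMap_right _).map_add, hg.symm v u]
  ring

abbrev core (hg : IsInnerForm g) : InnerProductSpace.Core ℝ (FormSpace V) where
  inner u w := g u w
  conj_inner_symm u w := hg.symm w u
  re_inner_nonneg := hg.nonneg
  add_left u v w := (hg.isLinearMap_left w).map_add u v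
  smul_left u v r := (hg.isLinearMap_left v).map_smul r u
  definite u h := by
    by_contra hu
    exact (hg.pos u hu).ne' h

theorem sum_smul_eq (hg : IsInnerForm g) {ι : Type*} [Fintype ι] [DecidableEq ι] {f : ι → V}
    (hf : ∀ i j, g (f i) (f j) = if i = j then 1 else 0)
    (hspan : Submodule.span ℝ (Set.range f) = ⊤) (u : V) :
    ∑ i, g (f i) u • f i = u := by
  let _ := hg.core.toNormedAddCommGroup
  let _ := InnerProductSpace.ofCore hg.core.toCore
  have hON : Orthonormal (E := FormSpace V) ℝ f := orthonormal_iff_ite.mpr hf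
  have h := (OrthonormalBasis.mk hON hspan.ge).sum_repr' u
  rw [OrthonormalBasis.coe_mk hON hspan.ge] at h
  exact h

theorem sum_inr_smul_eq (hg : IsInnerForm g) {ι κ : Type*} [Fintype ι] [Fintype κ]
    [DecidableEq ι] [DecidableEq κ] {v : ι → V} {w : κ → V}
    (hON : ∀ i j, g (Sum.elim v w i) (Sum.elim v w j) = if i = j then 1 else 0)
    (hspan : Submodule.span ℝ (Set.range (Sum.elim v w)) = ⊤) {z : V} (hz : ∀ i, g (v i) z = 0) :
    ∑ k, g (w k) z • w k = z := by
  simpa [Fintype.sum_sum_type, hz] using hg.sum_smul_eq hON hspan z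

theorem sum_apply_self_eq_of_orthonormal {W : Type*} [AddCommGroup W] [Module ℝ W]
    (hg : IsInnerForm g) {ι κ : Type*} [Fintype ι] [Fintype κ] [DecidableEq ι] [DecidableEq κ]
    {e : ι → V} {f : κ → V} (he : ∀ i j, g (e i) (e j) = if i = j then 1 else 0)
    (hespan : Submodule.span ℝ (Set.range e) = ⊤)
    (hf : ∀ i j, g (f i) (f j) = if i = j then 1 else 0)
    (hfspan : Submodule.span ℝ (Set.range f) = ⊤) (B : V →ₗ[ℝ] V →ₗ[ℝ] W) :
    ∑ i, B (e i) (e i) = ∑ k, B (f k) (f k) := by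
  have expand_right (u w : V) : B u w = ∑ k, g (f k) w • B u (f k) := by
    conv_lhs => rw [← hg.sum_smul_eq hf hfspan w]
    simp only [map_sum, map_smul]
  have expand_left (u w : V) : B u w = ∑ i, g (e i) u • B (e i) w := by
    conv_lhs => rw [← hg.sum_smul_eq he hespan u]
    simp only [map_sum, map_smul, LinearMap.sum_apply, LinearMap.smul_apply]
  calc ∑ i, B (e i) (e i) = ∑ i, ∑ k, g (f k) (e i) • B (e i) (f k) :=
        Finset.sum_congr rfl fun i _ => expand_right _ _
    _ = ∑ k, ∑ i, g (e i) (f k) • B (e i) (f k) := by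
        rw [Finset.sum_comm]
        simp only [hg.symm (f _)]
    _ = ∑ k, B (f k) (f k) := Finset.sum_congr rfl fun k _ => (expand_left _ _).symm

theorem exists_orthonormal_extension [FiniteDimensional ℝ V] (hg : IsInnerForm g) {k : ℕ}
    {v : Fin k → V} (hv : ∀ i j, g (v i) (v j) = if i = j then 1 else 0) :
    ∃ w : Fin (Module.finrank ℝ V - k) → V,
      (∀ i j, g (Sum.elim v w i) (Sum.elim v w j) = if i = j then 1 else 0) ∧
      Submodule.span ℝ (Set.range (Sum.elim v w)) = ⊤ := by
  let _ := hg.core.toNormedAddCommGroup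
  let _ := InnerProductSpace.ofCore hg.core.toCore
  have hvON : Orthonormal (E := FormSpace V) ℝ v := orthonormal_iff_ite.mpr hv
  have hk : k ≤ Module.finrank ℝ (FormSpace V) := by
    simpa using hvON.linearIndependent.fintype_card_le_finrank
  have hcard : Module.finrank ℝ (FormSpace V) =
      Fintype.card (Fin k ⊕ Fin (Module.finrank ℝ V - k)) := by
    simp only [Fintype.card_sum, Fintype.card_fin]
    exact (Nat.add_sub_cancel' hk).symm
  let inl : Fin k → Fin k ⊕ Fin (Module.finrank ℝ V - k) := Sum.inl
  let σ := Equiv.ofInjective inl Sum.inl_injective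
  have hrestrict :
      Orthonormal ℝ ((Set.range inl).domRestrict (Sum.elim (γ := FormSpace V) v 0)) := by
    convert hvON.comp σ.symm σ.symm.injective
    ext ⟨_, j, rfl⟩
    exact congrArg v (σ.symm_apply_apply j).symm
  obtain ⟨b, hb⟩ := Orthonormal.exists_orthonormalBasis_extension_of_card_eq hcard hrestrict
  have hbv : Sum.elim v (fun a => b (Sum.inr a)) = ⇑b := by
    ext (j | a)
    · exact (hb _ ⟨j, rfl⟩).symm
    · rfl
  refine ⟨fun a => b (Sum.inr a), ?_, ?_⟩
  · rw [hbv]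
    exact orthonormal_iff_ite.mp b.orthonormal
  · rw [hbv]
    exact b.toBasis.span_eq

end IsInnerForm

end InnerForm

section Metric

variable {P : Type*} [NormedAddCommGroup P] [NormedSpace ℝ P] {g : P → P → P → ℝ}

theorem IsMetric.isInnerForm (hg : IsMetric g) (z : P) : IsInnerForm (g z) :=
  ⟨hg.1 z, hg.2.1 z, hg.2.2.1 z⟩

theorem IsMetric.differentiableAt_apply (hg : IsMetric g) (u w z : P) :
    DifferentiableAt ℝ (fun y => g y u w) z :=
  ((hg.2.2.2 u w).differentiable (by simp)).differentiableAt

variable [FiniteDimensional ℝ P]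

def IsMetric.toBilin (hg : IsMetric g) (z : P) : P →L[ℝ] P →L[ℝ] ℝ :=
  LinearMap.toContinuousLinearMap <| LinearMap.toContinuousLinearMap.toLinearMap ∘ₗ
    LinearMap.mk₂ ℝ (g z) (fun u u' w => (hg.2.2.1 z w).map_add u u')
      (fun c u w => (hg.2.2.1 z w).map_smul c u)
      (fun u => ((hg.isInnerForm z).isLinearMap_right u).map_add)
      (fun c u => ((hg.isInnerForm z).isLinearMap_right u).map_smul c)

@[simp]
theorem IsMetric.toBilin_apply (hg : IsMetric g) (z u w : P) : hg.toBilin z u w = g z u w := rfl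

theorem IsMetric.contDiff_toBilin (hg : IsMetric g) : ContDiff ℝ (⊤ : ℕ∞) hg.toBilin :=
  contDiff_clm_apply_iff.mpr fun u => contDiff_clm_apply_iff.mpr fun w => hg.2.2.2 u w

theorem IsMetric.fderiv_toBilin_apply (hg : IsMetric g) (z w u v : P) :
    fderiv ℝ hg.toBilin z w u v = fderiv ℝ (fun z => g z u v) z w := by
  have hd := hg.contDiff_toBilin.differentiable (by simp) z
  change _ = fderiv ℝ (fun z => hg.toBilin z u v) z w
  rw [fderiv_clm_apply (hd.clm_apply (differentiableAt_const u)) (differentiableAt_const v),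
    fderiv_clm_apply hd (differentiableAt_const u)]
  simp

theorem IsMetric.differentiableAt_comp (hg : IsMetric g) {f A B : E → P} {x : E}
    (hf : DifferentiableAt ℝ f x) (hA : DifferentiableAt ℝ A x) (hB : DifferentiableAt ℝ B x) :
    DifferentiableAt ℝ (fun y => g (f y) (A y) (B y)) x :=
  (((hg.contDiff_toBilin.differentiable (by simp) (f x)).comp x hf).clm_apply hA).clm_apply hB

theorem IsMetric.fderiv_comp_apply (hg : IsMetric g) {f A B : E → P} {x : E}
    (hf : DifferentiableAt ℝ f x) (hA : DifferentiableAt ℝ A x) (hB : DifferentiableAt ℝ B x)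
    (u : E) :
    fderiv ℝ (fun y => g (f y) (A y) (B y)) x u =
      fderiv ℝ (fun z => g z (A x) (B x)) (f x) (fderiv ℝ f x u) +
        g (f x) (fderiv ℝ A x u) (B x) + g (f x) (A x) (fderiv ℝ B x u) := by
  have hbilin := hg.contDiff_toBilin.differentiable (by simp) (f x)
  have hd : DifferentiableAt ℝ (fun y => hg.toBilin (f y)) x := hbilin.comp x hf
  change fderiv ℝ (fun y => hg.toBilin (f y) (A y) (B y)) x u = _
  rw [fderiv_clm_apply (hd.clm_apply hA) hB, fderiv_clm_apply hd hA, fderiv_fun_comp x hbilin hf]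
  simp only [ContinuousLinearMap.flip_add, add_apply, ContinuousLinearMap.comp_apply,
    IsMetric.toBilin_apply, ContinuousLinearMap.flip_apply, hg.fderiv_toBilin_apply]
  ring

end Metric

section SecondFundamentalForm

theorem ContDiffAt.differentiableAt_fderiv {f : E → F} {x : E} (hf : ContDiffAt ℝ 2 f x) :
    DifferentiableAt ℝ (fderiv ℝ f) x :=
  (hf.fderiv_right (m := 1) le_rfl).differentiableAt one_ne_zero

def IsChristoffel.toBilin {P : Type*} [NormedAddCommGroup P] [NormedSpace ℝ P]
    {Γ : P → P → P → P} (hΓ : IsChristoffel Γ) (z : P) : P →ₗ[ℝ] P →ₗ[ℝ] P :=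
  LinearMap.mk₂ ℝ (Γ z) (fun u u' w => (hΓ.1 z w).map_add u u')
    (fun c u w => (hΓ.1 z w).map_smul c u) (fun u => (hΓ.2.1 z u).map_add)
    (fun c u => (hΓ.2.1 z u).map_smul c)

variable {ΓM : E → E → E → E} {ΓN : F → F → F → F} {φ : E → F} {x : E}

theorem sff_eq (hφ : DifferentiableAt ℝ (fderiv ℝ φ) x) (X Y : E) :
    sff ΓM ΓN φ x X Y = fderiv ℝ (fderiv ℝ φ) x X Y
      + ΓN (φ x) (fderiv ℝ φ x X) (fderiv ℝ φ x Y) - fderiv ℝ φ x (ΓM x X Y) := by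
  rw [sff, fderiv_clm_apply hφ (differentiableAt_const Y)]
  simp

def sffBilin (hΓM : IsChristoffel ΓM) (hΓN : IsChristoffel ΓN) (φ : E → F) (x : E) :
    E →ₗ[ℝ] E →ₗ[ℝ] F :=
  (fderiv ℝ (fderiv ℝ φ) x).toLinearMap₁₂
    + (hΓN.toBilin (φ x)).compl₁₂ (fderiv ℝ φ x : E →ₗ[ℝ] F) (fderiv ℝ φ x : E →ₗ[ℝ] F)
    - (hΓM.toBilin x).compr₂ (fderiv ℝ φ x : E →ₗ[ℝ] F)

theorem sffBilin_apply (hΓM : IsChristoffel ΓM) (hΓN : IsChristoffel ΓN)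
    (hφ : DifferentiableAt ℝ (fderiv ℝ φ) x) (X Y : E) :
    sffBilin hΓM hΓN φ x X Y = sff ΓM ΓN φ x X Y := by
  simp [sffBilin, sff_eq hφ, IsChristoffel.toBilin]

theorem sff_comm (hφ : ContDiffAt ℝ 2 φ x) (hΓM : ∀ X Y, ΓM x X Y = ΓM x Y X)
    (hΓN : ∀ p q, ΓN (φ x) p q = ΓN (φ x) q p) (X Y : E) :
    sff ΓM ΓN φ x X Y = sff ΓM ΓN φ x Y X := by
  rw [sff_eq hφ.differentiableAt_fderiv, sff_eq hφ.differentiableAt_fderiv,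
    hφ.isSymmSndFDerivAt (by simp) X Y, hΓM, hΓN]

theorem sff_apply_of_vertical (hΓN : IsChristoffel ΓN) (hφ : DifferentiableAt ℝ (fderiv ℝ φ) x)
    {W : E → E} (hW : DifferentiableAt ℝ W x) (hWvert : ∀ᶠ y in nhds x, fderiv ℝ φ y (W y) = 0)
    (X : E) :
    sff ΓM ΓN φ x X (W x) = -fderiv ℝ φ x (fderiv ℝ W x X + ΓM x X (W x)) := by
  have hconst : (fun y => fderiv ℝ φ y (W y)) =ᶠ[nhds x] fun _ => 0 := hWvert
  have hzero : fderiv ℝ (fun y => fderiv ℝ φ y (W y)) x X = 0 := by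
    rw [hconst.fderiv_eq, fderiv_const_apply, zero_apply]
  rw [fderiv_clm_apply hφ hW] at hzero
  simp only [add_apply, ContinuousLinearMap.comp_apply,
    ContinuousLinearMap.flip_apply] at hzero
  rw [sff_eq hφ, hWvert.self_of_nhds, (hΓN.2.1 (φ x) _).map_zero, add_zero, map_add,
    eq_neg_of_add_eq_zero_right hzero]
  abel

end SecondFundamentalForm

section HorizontallyConformal

variable {gM : E → E → E → ℝ} {gN : F → F → F → ℝ} {φ : E → F} {lam : E → ℝ}

theorem add_mem_Hor (hgM : IsMetric gM) {y X Y : E} (hX : X ∈ Hor gM φ y)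
    (hY : Y ∈ Hor gM φ y) : X + Y ∈ Hor gM φ y := fun Z hZ => by
  rw [(hgM.2.2.1 y Z).map_add, hX Z hZ, hY Z hZ, add_zero]

theorem exists_orthonormal_extension_of_vertical [FiniteDimensional ℝ E] (hgM : IsMetric gM)
    {x : E} {k : ℕ} {v : Fin k → E} (hv : ∀ i j, gM x (v i) (v j) = if i = j then 1 else 0)
    (hvvert : ∀ j, fderiv ℝ φ x (v j) = 0)
    (hvspan : ∀ u, fderiv ℝ φ x u = 0 → u ∈ Submodule.span ℝ (Set.range v)) :
    ∃ w : Fin (Module.finrank ℝ E - k) → E,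
      (∀ i j, gM x (Sum.elim v w i) (Sum.elim v w j) = if i = j then 1 else 0) ∧
      Submodule.span ℝ (Set.range (Sum.elim v w)) = ⊤ ∧ (∀ a, w a ∈ Hor gM φ x) ∧
      ∀ z ∈ Hor gM φ x, ∑ a, gM x (w a) z • w a = z := by
  have hg := hgM.isInnerForm x
  obtain ⟨w, hON, hspan⟩ := hg.exists_orthonormal_extension hv
  refine ⟨w, hON, hspan, fun a Z hZ => ?_, fun z hz => ?_⟩
  · exact hg.apply_eq_zero_of_mem_span (fun j => by simpa using hON (Sum.inr a) (Sum.inl j))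
      (hvspan Z hZ)
  · exact hg.sum_inr_smul_eq hON hspan fun j => by rw [hg.symm]; exact hz _ (hvvert j)

namespace HCSub

theorem gN_fderiv_of_mem_Hor (hHC : HCSub gM gN φ lam) (hgM : IsMetric gM) {y u h w : E}
    (hh : h ∈ Hor gM φ y) (hu : fderiv ℝ φ y (u - h) = 0) (hw : w ∈ Hor gM φ y) :
    gN (φ y) (fderiv ℝ φ y u) (fderiv ℝ φ y w) = lam y * gM y u w := by
  have hdu : fderiv ℝ φ y u = fderiv ℝ φ y h := by rwa [map_sub, sub_eq_zero] at hu
  have hgu : gM y u w = gM y h w := by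
    have hvert : gM y (u - h) w = 0 := by rw [(hgM.isInnerForm y).symm]; exact hw _ hu
    rwa [(hgM.2.2.1 y w).map_sub, sub_eq_zero] at hvert
  rw [hdu, hgu, hHC.2.2 y h hh w hw]

theorem gN_fderiv_self_le (hHC : HCSub gM gN φ lam) (hgM : IsMetric gM) {y a h : E}
    (hh : h ∈ Hor gM φ y) (ha : fderiv ℝ φ y (a - h) = 0) :
    gN (φ y) (fderiv ℝ φ y a) (fderiv ℝ φ y a) ≤ lam y * gM y a a := by
  have hdu : fderiv ℝ φ y a = fderiv ℝ φ y h := by rwa [map_sub, sub_eq_zero] at ha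
  have hpyth : gM y a a = gM y h h + gM y (a - h) (a - h) := by
    conv_lhs => rw [← add_sub_cancel h a]
    rw [(hgM.isInnerForm y).apply_add_add, hh _ ha, mul_zero, add_zero]
  rw [hdu, hHC.2.2 y h hh h hh, hpyth, mul_add, le_add_iff_nonneg_right]
  exact mul_nonneg (hHC.2.1 y).le ((hgM.isInnerForm y).nonneg _)

theorem eq_zero_of_forall_mem_Hor (hHC : HCSub gM gN φ lam) (hgN : IsMetric gN) {x : E}
    (hPh : ∀ u, ∃ h ∈ Hor gM φ x, fderiv ℝ φ x (u - h) = 0) {T : F}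
    (hT : ∀ z ∈ Hor gM φ x, gN (φ x) T (fderiv ℝ φ x z) = 0) : T = 0 := by
  obtain ⟨Z, rfl⟩ := hHC.1 x T
  obtain ⟨h, hh, hZh⟩ := hPh Z
  rw [map_sub, sub_eq_zero] at hZh
  rw [hZh] at hT ⊢
  by_contra hne
  exact ((hgN.isInnerForm _).pos _ hne).ne' (hT h hh)

variable [FiniteDimensional ℝ F]

theorem fderiv_defect_eq_zero (hHC : HCSub gM gN φ lam) (hgM : IsMetric gM) (hgN : IsMetric gN)
    {x : E} (hφ : ContDiffAt ℝ 2 φ x) (hlam : DifferentiableAt ℝ lam x)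
    (hPh : ∀ y u, ∃ h ∈ Hor gM φ y, fderiv ℝ φ y (u - h) = 0) {a b : E}
    (ha : a ∈ Hor gM φ x) (hb : b ∈ Hor gM φ x) :
    fderiv ℝ (fun y => gN (φ y) (fderiv ℝ φ y a) (fderiv ℝ φ y b) - lam y * gM y a b) x = 0 := by
  set ρ : E → E → E → ℝ :=
    fun a b y => gN (φ y) (fderiv ℝ φ y a) (fderiv ℝ φ y b) - lam y * gM y a b with hρ
  have hdiff (a b : E) : DifferentiableAt ℝ (ρ a b) x :=
    (hgN.differentiableAt_comp (hφ.differentiableAt two_ne_zero)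
      (hφ.differentiableAt_fderiv.clm_apply (differentiableAt_const a))
      (hφ.differentiableAt_fderiv.clm_apply (differentiableAt_const b))).sub
      (hlam.mul (hgM.differentiableAt_apply a b x))
  have hstat {a : E} (ha : a ∈ Hor gM φ x) : HasFDerivAt (ρ a a) (0 : E →L[ℝ] ℝ) x := by
    have hmax : IsLocalMax (ρ a a) x := Filter.Eventually.of_forall fun y => by
      obtain ⟨h, hh, hah⟩ := hPh y a
      simp only [hρ, hHC.2.2 x a ha a ha, sub_self, sub_nonpos]
      exact hHC.gN_fderiv_self_le hgM hh hah
    simpa only [hmax.fderiv_eq_zero] using (hdiff a a).hasFDerivAt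
  have hpolar : ρ a b = fun y => 2⁻¹ * (ρ (a + b) (a + b) y - ρ a a y - ρ b b y) := by
    funext y
    simp only [hρ, map_add, (hgN.isInnerForm (φ y)).apply_add_add,
      (hgM.isInnerForm y).apply_add_add]
    ring
  change fderiv ℝ (ρ a b) x = 0
  rw [hpolar]
  simpa using ((((hstat (add_mem_Hor hgM ha hb)).sub (hstat ha)).sub (hstat hb)).const_mul
    (2⁻¹ : ℝ)).fderiv

theorem gN_sff_add_gN_sff (hHC : HCSub gM gN φ lam) (hgM : IsMetric gM) (hgN : IsMetric gN)
    {ΓM : E → E → E → E} {ΓN : F → F → F → F} (hΓM : IsLeviCivita gM ΓM)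
    (hΓN : IsLeviCivita gN ΓN) {x : E} (hφ : ContDiffAt ℝ 2 φ x) (hlam : DifferentiableAt ℝ lam x)
    (hPh : ∀ y u, ∃ h ∈ Hor gM φ y, fderiv ℝ φ y (u - h) = 0) {a b : E}
    (ha : a ∈ Hor gM φ x) (hb : b ∈ Hor gM φ x) (u : E) :
    gN (φ x) (sff ΓM ΓN φ x u a) (fderiv ℝ φ x b)
      + gN (φ x) (fderiv ℝ φ x a) (sff ΓM ΓN φ x u b) = fderiv ℝ lam x u * gM x a b := by
  have hdφa := hφ.differentiableAt_fderiv.clm_apply (differentiableAt_const a)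
  have hdφb := hφ.differentiableAt_fderiv.clm_apply (differentiableAt_const b)
  have hga := hgM.differentiableAt_apply a b x
  have hdefect := congrArg (· u) (hHC.fderiv_defect_eq_zero hgM hgN hφ hlam hPh ha hb)
  rw [fderiv_fun_sub (hgN.differentiableAt_comp (hφ.differentiableAt two_ne_zero) hdφa hdφb)
      (hlam.fun_mul hga), fderiv_fun_mul hlam hga] at hdefect
  simp only [sub_apply, add_apply, smul_apply, smul_eq_mul, zero_apply, hΓN.2.2, hΓM.2.2,
    hgN.fderiv_comp_apply (hφ.differentiableAt two_ne_zero) hdφa hdφb u] at hdefect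
  obtain ⟨ha', hha', hua⟩ := hPh x (ΓM x u a)
  obtain ⟨hb', hhb', hub⟩ := hPh x (ΓM x u b)
  have hpa := hHC.gN_fderiv_of_mem_Hor hgM hha' hua hb
  have hpb : gN (φ x) (fderiv ℝ φ x a) (fderiv ℝ φ x (ΓM x u b))
      = lam x * gM x a (ΓM x u b) := by
    rw [(hgN.isInnerForm _).symm, hHC.gN_fderiv_of_mem_Hor hgM hhb' hub ha,
      (hgM.isInnerForm x).symm]
  simp only [sff, (hgN.2.2.1 _ _).map_add, (hgN.2.2.1 _ _).map_sub,
    ((hgN.isInnerForm _).isLinearMap_right _).map_add,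
    ((hgN.isInnerForm _).isLinearMap_right _).map_sub, hpa, hpb]
  linarith

theorem sum_sff_horizontal (hHC : HCSub gM gN φ lam) (hgM : IsMetric gM) (hgN : IsMetric gN)
    {ΓM : E → E → E → E} {ΓN : F → F → F → F} (hΓM : IsLeviCivita gM ΓM)
    (hΓN : IsLeviCivita gN ΓN) {x : E} (hφ : ContDiffAt ℝ 2 φ x) (hlam : DifferentiableAt ℝ lam x)
    (hPh : ∀ y u, ∃ h ∈ Hor gM φ y, fderiv ℝ φ y (u - h) = 0) {gradlam : E}
    (hgrad : ∀ u, gM x gradlam u = fderiv ℝ lam x u) {ι : Type*} [Fintype ι] {w : ι → E}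
    (hw : ∀ i, w i ∈ Hor gM φ x) (hwunit : ∀ i, gM x (w i) (w i) = 1)
    (hwexp : ∀ z ∈ Hor gM φ x, ∑ i, gM x (w i) z • w i = z) :
    ∑ i, sff ΓM ΓN φ x (w i) (w i)
      = -(((Fintype.card ι : ℝ) - 2) / 2) • fderiv ℝ φ x ((lam x)⁻¹ • gradlam) := by
  rw [← sub_eq_zero]
  refine hHC.eq_zero_of_forall_mem_Hor hgN (hPh x) fun z hz => ?_
  have hterm (i : ι) : gN (φ x) (sff ΓM ΓN φ x (w i) (w i)) (fderiv ℝ φ x z)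
      = fderiv ℝ lam x (w i) * gM x (w i) z - fderiv ℝ lam x z / 2 := by
    have h1 := hHC.gN_sff_add_gN_sff hgM hgN hΓM hΓN hφ hlam hPh (hw i) hz (w i)
    have h2 := hHC.gN_sff_add_gN_sff hgM hgN hΓM hΓN hφ hlam hPh (hw i) (hw i) z
    rw [hwunit, sff_comm hφ (hΓM.2.1 x) (hΓN.2.1 (φ x)) z (w i),
      (hgN.isInnerForm _).symm _ (sff ΓM ΓN φ x (w i) z)] at h2
    rw [(hgN.isInnerForm _).symm _ (sff ΓM ΓN φ x (w i) z)] at h1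
    linarith
  have hgrad_z : gN (φ x) (fderiv ℝ φ x ((lam x)⁻¹ • gradlam)) (fderiv ℝ φ x z)
      = fderiv ℝ lam x z := by
    obtain ⟨h, hh, hgradh⟩ := hPh x ((lam x)⁻¹ • gradlam)
    rw [hHC.gN_fderiv_of_mem_Hor hgM hh hgradh hz, (hgM.2.2.1 x z).map_smul, smul_eq_mul,
      hgrad, ← mul_assoc, mul_inv_cancel₀ (hHC.2.1 x).ne', one_mul]
  have hsum : ∑ i, fderiv ℝ lam x (w i) * gM x (w i) z = fderiv ℝ lam x z := by
    conv_rhs => rw [← hwexp z hz]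
    simp [mul_comm]
  let pairing := IsLinearMap.mk' _ (hgN.2.2.1 (φ x) (fderiv ℝ φ x z))
  change pairing _ = 0
  rw [map_sub, map_sum, map_smul]
  simp only [pairing, IsLinearMap.mk'_apply, hterm, hgrad_z, Finset.sum_sub_distrib, hsum,
    Finset.sum_const, Finset.card_univ, nsmul_eq_mul, smul_eq_mul]
  ring

end HCSub

end HorizontallyConformal

/-- For a horizontally conformal submersion `φ : M → N` with dilatation
`λ`, `dim M = m`, `dim N = n`, the tension field satisfies
`τ(φ) = −((n−2)/2) φ_*(grad(ln λ)) − (m−n) φ_*(κ_φ)`, where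
`κ_φ = (1/(m−n)) Σⱼ (∇^M_{vⱼ} vⱼ)^⊥` is the mean curvature of the fibres, computed from
an orthonormal frame `v` of the vertical distribution `V^φ = ker φ_*` at `x`, `Ph` the
`g`-orthogonal projection onto `H^φ`, and `τ(φ)(x) = Σᵢ B(eᵢ,eᵢ)` over a `g`-orthonormal
basis `e` of `T_x M`.  (`grad ln λ = (1/λ) grad λ`.) -/
theorem stmt18
    (gM : E → E → E → ℝ) (gN : F → F → F → ℝ)
    (ΓM : E → E → E → E) (ΓN : F → F → F → F)
    (hgM : IsMetric gM) (hgN : IsMetric gN)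
    (hΓM : IsLeviCivita gM ΓM) (hΓN : IsLeviCivita gN ΓN)
    (φ : E → F) (hφ : ContDiff ℝ (⊤ : ℕ∞) φ)
    [FiniteDimensional ℝ E] [FiniteDimensional ℝ F]
    (hdim : Module.finrank ℝ F < Module.finrank ℝ E)
    (lam : E → ℝ) (hlam : ContDiff ℝ (⊤ : ℕ∞) lam)
    (hHC : HCSub gM gN φ lam)
    (gradlam : E → E)
    (hgrad : ∀ y u, gM y (gradlam y) u = fderiv ℝ lam y u)
    -- `Ph` is the `g`-orthogonal projection onto the horizontal distribution
    (Ph : E → E → E)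
    (hPh : ∀ y u, Ph y u ∈ Hor gM φ y ∧ fderiv ℝ φ y (u - Ph y u) = 0)
    (x : E)
    -- a `g`-orthonormal basis of `T_x M`
    (e : Fin (Module.finrank ℝ E) → E)
    (heON : ∀ i j, gM x (e i) (e j) = if i = j then 1 else 0)
    (hespan : Submodule.span ℝ (Set.range e) = ⊤)
    -- an orthonormal frame of vertical vector fields spanning `V^φ` at `x`
    (v : Fin (Module.finrank ℝ E - Module.finrank ℝ F) → (E → E))
    (hvdiff : ∀ j, Differentiable ℝ (v j))
    (hvvert : ∀ j y, fderiv ℝ φ y (v j y) = 0)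
    (hvON : ∀ i j, gM x (v i x) (v j x) = if i = j then 1 else 0)
    (hvspan : ∀ u, fderiv ℝ φ x u = 0 →
      u ∈ Submodule.span ℝ (Set.range fun j => v j x)) :
    ∑ i, sff ΓM ΓN φ x (e i) (e i)
      = -(((Module.finrank ℝ F : ℝ) - 2) / 2) •
            fderiv ℝ φ x ((lam x)⁻¹ • gradlam x)
        - ((Module.finrank ℝ E : ℝ) - (Module.finrank ℝ F : ℝ)) •
            fderiv ℝ φ x
              (((Module.finrank ℝ E : ℝ) - (Module.finrank ℝ F : ℝ))⁻¹ •
                ∑ j, Ph x (fderiv ℝ (v j) x (v j x) + ΓM x (v j x) (v j x))) := by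
  have hPh' : ∀ y u, ∃ h ∈ Hor gM φ y, fderiv ℝ φ y (u - h) = 0 := fun y u => ⟨Ph y u, hPh y u⟩
  have hφx : ContDiffAt ℝ 2 φ x := hφ.contDiffAt.of_le (WithTop.coe_le_coe.mpr le_top)
  have hdφ := hφx.differentiableAt_fderiv
  obtain ⟨w, hON, hspan, hwHor, hwexp⟩ :=
    exists_orthonormal_extension_of_vertical hgM hvON (fun j => hvvert j x) hvspan
  have hdφPh (u : E) : fderiv ℝ φ x (Ph x u) = fderiv ℝ φ x u := by
    rw [eq_comm, ← sub_eq_zero, ← map_sub]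
    exact (hPh x u).2
  have hmn : (Module.finrank ℝ E : ℝ) - Module.finrank ℝ F ≠ 0 :=
    sub_ne_zero.mpr (by exact_mod_cast hdim.ne')
  rw [← Finset.sum_congr rfl fun i _ => sffBilin_apply hΓM.1 hΓN.1 hdφ (e i) (e i),
    (hgM.isInnerForm x).sum_apply_self_eq_of_orthonormal heON hespan hON hspan,
    Fintype.sum_sum_type]
  simp only [Sum.elim_inl, Sum.elim_inr, sffBilin_apply hΓM.1 hΓN.1 hdφ,
    sff_apply_of_vertical hΓN.1 hdφ (hvdiff _ x) (Filter.Eventually.of_forall (hvvert _)),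
    hHC.sum_sff_horizontal hgM hgN hΓM hΓN hφx (hlam.differentiable (by simp) x) hPh' (hgrad x)
      hwHor (fun a => by simpa using hON (Sum.inr a) (Sum.inr a)) hwexp,
    Fintype.card_fin, Nat.sub_sub_self hdim.le, map_smul, smul_smul, mul_inv_cancel₀ hmn,
    one_smul, map_sum, hdφPh, Finset.sum_neg_distrib]
  abel

end
end
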